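/- Let γ > 2 and let (t₁, t₂) be a pair of positive reals solving t₁ e^{−t₁²/2} = t₂ e^{−t₂²/2} and 1/t₁ + 1/t₂ = γ with t₁ < 2/γ < t₂. Then ∫_{t₁}^∞ e^{−s²} ds + ∫_{t₂}^∞ e^{−s²} ds < 2 ∫_{2/γ}^∞ e^{−s²} ds. -/

import Mathlib

open MeasureTheory

noncomputable def Gfun (x : ℝ) : ℝ := (x ^ 4 + 2 * x ^ 3 - 2 * x - 1) / x ^ 2

lemma log_lower {x : ℝ} (hx : 1 < x) : 2 * (x - 1) / (x + 1) < Real.log x := by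
  have key : StrictMonoOn (fun y : ℝ => Real.log y - 2 * (y - 1) / (y + 1)) (Set.Ici 1) := by
    apply strictMonoOn_of_deriv_pos (convex_Ici 1)
    · apply ContinuousOn.sub
      · apply Real.continuousOn_log.mono
        intro y hy
        simp only [Set.mem_Ici] at hy
        simp only [Set.mem_compl_iff, Set.mem_singleton_iff]
        intro h
        rw [h] at hy
        linarith
      · apply ContinuousOn.div
        · fun_prop
        · fun_prop
        · intro y hy; simp only [Set.mem_Ici] at hy; intro h; linarith
    · intro y hy
      rw [interior_Ici] at hy
      have hy1 : (1 : ℝ) < y := hy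
      have hy0 : (0 : ℝ) < y := by linarith
      have hyp1 : (0 : ℝ) < y + 1 := by linarith
      have hd1 : HasDerivAt (fun y : ℝ => 2 * (y - 1) / (y + 1))
          ((2 * 1 * (y + 1) - 2 * (y - 1) * 1) / (y + 1) ^ 2) y := by
        exact (((hasDerivAt_id y).sub_const 1).const_mul 2).div
          ((hasDerivAt_id y).add_const 1) (by linarith)
      have hd : HasDerivAt (fun y : ℝ => Real.log y - 2 * (y - 1) / (y + 1))
          (y⁻¹ - (2 * 1 * (y + 1) - 2 * (y - 1) * 1) / (y + 1) ^ 2) y :=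
        (Real.hasDerivAt_log hy0.ne').sub hd1
      rw [hd.deriv]
      have heq : y⁻¹ - (2 * 1 * (y + 1) - 2 * (y - 1) * 1) / (y + 1) ^ 2
          = (y - 1) ^ 2 / (y * (y + 1) ^ 2) := by
        field_simp
        ring
      rw [heq]
      exact div_pos (pow_pos (by linarith) 2) (by positivity)
  have h0 : (fun y : ℝ => Real.log y - 2 * (y - 1) / (y + 1)) 1 = 0 := by norm_num
  have := key (Set.self_mem_Ici) (Set.mem_Ici.mpr hx.le) hx
  rw [h0] at this
  linarith [this]

set_option maxHeartbeats 1000000 in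
lemma Rmono : StrictMonoOn (fun x => Gfun x / Real.log x) (Set.Ioi (1 : ℝ)) := by
  apply strictMonoOn_of_deriv_pos (convex_Ioi 1)
  · apply ContinuousOn.div
    · apply ContinuousOn.div
      · fun_prop
      · fun_prop
      · intro y hy
        have : (1 : ℝ) < y := hy
        positivity
    · apply Real.continuousOn_log.mono
      intro y hy
      have hy1 : (1:ℝ) < y := hy
      simp only [Set.mem_compl_iff, Set.mem_singleton_iff]
      intro h
      rw [h] at hy1
      linarith
    · intro y hy
      have : (1 : ℝ) < y := hy
      exact (Real.log_pos this).ne'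
  · rw [interior_Ioi]
    intro x hx
    have hx1 : (1 : ℝ) < x := hx
    have hx0 : (0 : ℝ) < x := by linarith
    have hL : 0 < Real.log x := Real.log_pos hx1
    have hN : HasDerivAt (fun x : ℝ => x ^ 4 + 2 * x ^ 3 - 2 * x - 1)
        (4 * x ^ 3 + 6 * x ^ 2 - 2) x := by
      have h1 := hasDerivAt_pow 4 x
      have h2 := (hasDerivAt_pow 3 x).const_mul 2
      have h3 := (hasDerivAt_id x).const_mul 2
      have := ((h1.add h2).sub h3).sub_const 1
      refine this.congr_deriv ?_
      push_cast
      ring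
    have hD : HasDerivAt (fun x : ℝ => x ^ 2) (2 * x) x := by
      simpa using hasDerivAt_pow 2 x
    have hG : HasDerivAt Gfun
        (((4 * x ^ 3 + 6 * x ^ 2 - 2) * x ^ 2 - (x ^ 4 + 2 * x ^ 3 - 2 * x - 1) * (2 * x)) /
          (x ^ 2) ^ 2) x := by
      exact hN.div hD (by positivity)
    have hR := hG.div (Real.hasDerivAt_log hx0.ne') hL.ne'
    rw [show (fun x => Gfun x / Real.log x) = Gfun / Real.log from rfl, hR.deriv]
    apply div_pos _ (by positivity)
    set A : ℝ := ((4 * x ^ 3 + 6 * x ^ 2 - 2) * x ^ 2 - (x ^ 4 + 2 * x ^ 3 - 2 * x - 1) * (2 * x)) /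
      (x ^ 2) ^ 2 with hA
    have hAeq : A = (2 * x ^ 5 + 2 * x ^ 4 + 2 * x ^ 2 + 2 * x) / x ^ 4 := by
      rw [hA]; field_simp; ring
    have hApos : 0 < A := by rw [hAeq]; positivity
    have hlog := log_lower hx1
    have step1 : A * (2 * (x - 1) / (x + 1)) < A * Real.log x :=
      mul_lt_mul_of_pos_left hlog hApos
    have step2 : Gfun x * x⁻¹ ≤ A * (2 * (x - 1) / (x + 1)) := by
      have hGval : Gfun x * x⁻¹ = (x ^ 4 + 2 * x ^ 3 - 2 * x - 1) / x ^ 3 := by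
        rw [Gfun, div_mul_eq_mul_div,
          div_eq_div_iff (by positivity : ((x:ℝ) ^ 2) ≠ 0) (by positivity : ((x:ℝ) ^ 3) ≠ 0)]
        field_simp
      have hAval : A * (2 * (x - 1) / (x + 1))
          = (2 * x ^ 5 + 2 * x ^ 4 + 2 * x ^ 2 + 2 * x) * (2 * (x - 1)) / (x ^ 4 * (x + 1)) := by
        rw [hAeq, div_mul_div_comm]
      rw [hGval, hAval, div_le_div_iff₀ (by positivity) (by positivity)]
      have hid : (2 * x ^ 5 + 2 * x ^ 4 + 2 * x ^ 2 + 2 * x) * (2 * (x - 1)) * x ^ 3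
          - (x ^ 4 + 2 * x ^ 3 - 2 * x - 1) * (x ^ 4 * (x + 1))
          = 3 * x ^ 4 * (x - 1) ^ 3 * (x + 1) ^ 2 := by ring
      have hnn : 0 ≤ 3 * x ^ 4 * (x - 1) ^ 3 * (x + 1) ^ 2 := by
        apply mul_nonneg (mul_nonneg (by positivity) (pow_nonneg (by linarith) 3)) (by positivity)
      linarith
    linarith

lemma delta_eq {γ s u : ℝ} (hs : 0 < s) (hu : 0 < u) (hγ : 0 < γ) (h : 1 / s + 1 / u = γ) :
    (Real.log u - u ^ 2 / 2) - (Real.log s - s ^ 2 / 2)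
      = Real.log (u / s) - Gfun (u / s) / (2 * γ ^ 2) := by
  have hγe : γ = (s + u) / (s * u) := by
    rw [← h]; field_simp; ring
  rw [Real.log_div hu.ne' hs.ne', Gfun, hγe]
  have hsu : 0 < s + u := by linarith
  field_simp
  ring

set_option maxHeartbeats 1000000 in
lemma key_pointwise (γ t₁ t₂ : ℝ) (hγ : 2 < γ) (h1 : 0 < t₁) (h2 : 0 < t₂)
    (heq1 : t₁ * Real.exp (-t₁ ^ 2 / 2) = t₂ * Real.exp (-t₂ ^ 2 / 2))
    (heq2 : 1 / t₁ + 1 / t₂ = γ)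
    (hlt1 : t₁ < 2 / γ) (hlt2 : 2 / γ < t₂)
    {s : ℝ} (hs1 : t₁ < s) (hs2 : s < 2 / γ) :
    Real.exp (-s ^ 2) < ((γ * s - 1) ^ 2)⁻¹ * Real.exp (-(s / (γ * s - 1)) ^ 2) := by
  have hγ0 : (0 : ℝ) < γ := by linarith
  have hs0 : 0 < s := lt_trans h1 hs1
  -- t₁ > 1/γ
  have ht2inv : 0 < 1 / t₂ := by positivity
  have hA : 1 / t₁ < γ := by linarith
  have hγt1 : 1 < γ * t₁ := by
    rw [div_lt_iff₀ h1] at hA; linarith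
  have hst : 0 < γ * s - 1 := by
    have h := mul_lt_mul_of_pos_left hs1 hγ0
    linarith
  have hγs2 : γ * s < 2 := by
    rw [lt_div_iff₀ hγ0] at hs2; linarith
  set u : ℝ := s / (γ * s - 1) with hu
  have hu0 : 0 < u := by positivity
  have hcon : 1 / s + 1 / u = γ := by
    rw [hu]; field_simp; ring
  have hsu : s < u := by
    rw [hu, lt_div_iff₀ hst]
    have h := mul_lt_mul_of_pos_left (show γ * s - 1 < 1 by linarith) hs0
    linarith
  have hut2 : u < t₂ := by
    have h1s : 1 / u = γ - 1 / s := by rw [← hcon]; ring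
    have h1t2 : 1 / t₂ = γ - 1 / t₁ := by rw [← heq2]; ring
    have hss : 1 / s < 1 / t₁ := by
      apply div_lt_div_of_pos_left one_pos h1 hs1
    have : 1 / t₂ < 1 / u := by rw [h1s, h1t2]; linarith
    rwa [div_lt_div_iff₀ h2 hu0, one_mul, one_mul] at this
  have ht12 : t₁ < t₂ := hlt1.trans hlt2
  set x : ℝ := u / s with hx
  set x₀ : ℝ := t₂ / t₁ with hx₀
  have hx1 : 1 < x := by rw [hx, lt_div_iff₀ hs0]; linarith
  have hx₀1 : 1 < x₀ := by rw [hx₀, lt_div_iff₀ h1]; linarith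
  have hxx₀ : x < x₀ := by
    rw [hx, hx₀, div_lt_div_iff₀ hs0 h1]
    have ha := mul_lt_mul_of_pos_right hut2 h1
    have hb := mul_lt_mul_of_pos_left hs1 h2
    linarith
  -- endpoint equality gives R x₀ = 2γ²
  have hlog0 : (Real.log t₂ - t₂ ^ 2 / 2) - (Real.log t₁ - t₁ ^ 2 / 2) = 0 := by
    have := congrArg Real.log heq1
    rw [Real.log_mul h1.ne' (Real.exp_ne_zero _), Real.log_mul h2.ne' (Real.exp_ne_zero _),
      Real.log_exp, Real.log_exp] at this
    linarith
  have hd0 := delta_eq h1 h2 hγ0 heq2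
  rw [hlog0] at hd0
  have hlogx₀ : 0 < Real.log x₀ := Real.log_pos hx₀1
  have h2γ : (0:ℝ) < 2 * γ ^ 2 := by positivity
  have hG₀ : Gfun x₀ = Real.log x₀ * (2 * γ ^ 2) := by
    have h' : Gfun x₀ / (2 * γ ^ 2) = Real.log x₀ := by rw [hx₀]; linarith
    rw [← h', div_mul_cancel₀ _ h2γ.ne']
  have hR₀ : Gfun x₀ / Real.log x₀ = 2 * γ ^ 2 := by
    rw [hG₀, mul_comm, mul_div_assoc, div_self hlogx₀.ne', mul_one]
  have hRx : Gfun x / Real.log x < 2 * γ ^ 2 := by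
    rw [← hR₀]
    exact Rmono (Set.mem_Ioi.mpr hx1) (Set.mem_Ioi.mpr hx₀1) hxx₀
  have hlogx : 0 < Real.log x := Real.log_pos hx1
  have hGx : Gfun x < 2 * γ ^ 2 * Real.log x := by
    rw [div_lt_iff₀ hlogx] at hRx; linarith
  have hdelta := delta_eq hs0 hu0 hγ0 hcon
  rw [← hx] at hdelta
  have hpos : 0 < (Real.log u - u ^ 2 / 2) - (Real.log s - s ^ 2 / 2) := by
    rw [hdelta]
    have h2γ : (0:ℝ) < 2 * γ ^ 2 := by positivity
    rw [sub_pos, div_lt_iff₀ h2γ]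
    linarith [hGx, mul_comm (Real.log x) (2 * γ ^ 2)]
  -- exponentiate
  have hfs : s * Real.exp (-s ^ 2 / 2) < u * Real.exp (-u ^ 2 / 2) := by
    have hmono := Real.exp_lt_exp.mpr (by linarith : Real.log s - s ^ 2 / 2 < Real.log u - u ^ 2 / 2)
    have es : Real.exp (Real.log s - s ^ 2 / 2) = s * Real.exp (-s ^ 2 / 2) := by
      rw [Real.exp_sub, Real.exp_log hs0, show (-s ^ 2 / 2 : ℝ) = -(s ^ 2 / 2) by ring,
        Real.exp_neg, div_eq_mul_inv]
    have eu : Real.exp (Real.log u - u ^ 2 / 2) = u * Real.exp (-u ^ 2 / 2) := by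
      rw [Real.exp_sub, Real.exp_log hu0, show (-u ^ 2 / 2 : ℝ) = -(u ^ 2 / 2) by ring,
        Real.exp_neg, div_eq_mul_inv]
    rwa [es, eu] at hmono
  have hfspos : 0 < s * Real.exp (-s ^ 2 / 2) := by positivity
  have hsq : (s * Real.exp (-s ^ 2 / 2)) ^ 2 < (u * Real.exp (-u ^ 2 / 2)) ^ 2 := by
    apply pow_lt_pow_left₀ hfs hfspos.le
    norm_num
  have hexps : Real.exp (-s ^ 2 / 2) ^ 2 = Real.exp (-s ^ 2) := by
    rw [sq, ← Real.exp_add]; ring_nf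
  have hexpu : Real.exp (-u ^ 2 / 2) ^ 2 = Real.exp (-u ^ 2) := by
    rw [sq, ← Real.exp_add]; ring_nf
  have hsq' : s ^ 2 * Real.exp (-s ^ 2) < u ^ 2 * Real.exp (-u ^ 2) := by
    rw [mul_pow, mul_pow, hexps, hexpu] at hsq
    exact hsq
  have hinv : ((γ * s - 1) ^ 2)⁻¹ = u ^ 2 / s ^ 2 := by
    rw [hu]; field_simp
  rw [hinv, div_mul_eq_mul_div, lt_div_iff₀ (by positivity : (0:ℝ) < s ^ 2)]
  linarith [hsq', mul_comm (Real.exp (-s ^ 2)) (s ^ 2)]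

set_option maxHeartbeats 1000000 in
/-- For `γ > 2` and the nonsymmetric positive solution `(t₁, t₂)` of the system
`t₁ e^{-t₁²/2} = t₂ e^{-t₂²/2}`, `1/t₁ + 1/t₂ = γ` with `t₁ < 2/γ < t₂`, one has
`Γ(t₁) + Γ(t₂) < 2 Γ(2/γ)` with `Γ(t) = ∫_t^∞ e^{-s²} ds`. -/
theorem action_nonsymmetric_lt_symmetric (γ t₁ t₂ : ℝ) (hγ : 2 < γ)
    (h1 : 0 < t₁) (h2 : 0 < t₂)
    (heq1 : t₁ * Real.exp (-t₁ ^ 2 / 2) = t₂ * Real.exp (-t₂ ^ 2 / 2))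
    (heq2 : 1 / t₁ + 1 / t₂ = γ)
    (hlt1 : t₁ < 2 / γ) (hlt2 : 2 / γ < t₂) :
    (∫ s in Set.Ioi t₁, Real.exp (-s ^ 2)) + (∫ s in Set.Ioi t₂, Real.exp (-s ^ 2)) <
      2 * ∫ s in Set.Ioi (2 / γ), Real.exp (-s ^ 2) := by
  have hγ0 : (0 : ℝ) < γ := by linarith
  set m : ℝ := 2 / γ with hm
  have hm0 : 0 < m := by positivity
  -- basic facts
  have ht2inv : 0 < 1 / t₂ := by positivity
  have hA : 1 / t₁ < γ := by linarith
  have hγt1 : 1 < γ * t₁ := by rw [div_lt_iff₀ h1] at hA; linarith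
  -- integrability
  have hint : Integrable (fun s : ℝ => Real.exp (-s ^ 2)) := by
    have := integrable_exp_neg_mul_sq (by norm_num : (0:ℝ) < 1)
    simpa using this
  have hIoi : ∀ a : ℝ, IntegrableOn (fun s : ℝ => Real.exp (-s ^ 2)) (Set.Ioi a) :=
    fun a => hint.integrableOn
  -- splitting lemma
  have split : ∀ a b : ℝ, a ≤ b →
      (∫ s in Set.Ioi a, Real.exp (-s ^ 2)) =
        (∫ s in a..b, Real.exp (-s ^ 2)) + ∫ s in Set.Ioi b, Real.exp (-s ^ 2) := by
    intro a b hab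
    rw [intervalIntegral.integral_of_le hab, ← MeasureTheory.setIntegral_union
      Set.Ioc_disjoint_Ioi_same measurableSet_Ioi hint.integrableOn hint.integrableOn,
      Set.Ioc_union_Ioi_eq_Ioi hab]
  rw [split t₁ m hlt1.le, split m t₂ hlt2.le]
  have hkey : (∫ s in t₁..m, Real.exp (-s ^ 2)) < ∫ s in m..t₂, Real.exp (-s ^ 2) := by
    -- substitution
    have hφderiv : ∀ s ∈ Set.uIcc t₁ m, HasDerivAt (fun s => s / (γ * s - 1))
        (-(((γ * s - 1) ^ 2)⁻¹)) s := by
      intro s hs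
      rw [Set.uIcc_of_le hlt1.le] at hs
      have hst : 0 < γ * s - 1 := by
        have := hs.1; nlinarith
      have hden : HasDerivAt (fun s : ℝ => γ * s - 1) γ s := by
        simpa using ((hasDerivAt_id s).const_mul γ).sub_const 1
      have hd : HasDerivAt (fun s => s / (γ * s - 1))
          ((1 * (γ * s - 1) - s * γ) / (γ * s - 1) ^ 2) s :=
        (hasDerivAt_id s).div hden hst.ne'
      convert hd using 1
      rw [show (1 * (γ * s - 1) - s * γ : ℝ) = -1 by ring, neg_div, one_div]
    have hφCont : ContinuousOn (fun s => -(((γ * s - 1) ^ 2)⁻¹)) (Set.uIcc t₁ m) := by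
      rw [Set.uIcc_of_le hlt1.le]
      apply ContinuousOn.neg
      apply ContinuousOn.inv₀
      · fun_prop
      · intro s hs
        have hst : 0 < γ * s - 1 := by have := hs.1; nlinarith
        positivity
    have hgc : Continuous fun v : ℝ => Real.exp (-v ^ 2) := by fun_prop
    have hsub := intervalIntegral.integral_comp_smul_deriv hφderiv hφCont hgc
    have hφa : t₁ / (γ * t₁ - 1) = t₂ := by
      have h12 : γ * (t₁ * t₂) = t₂ + t₁ := by
        rw [← heq2]; field_simp
      rw [div_eq_iff (by intro h; nlinarith : γ * t₁ - 1 ≠ 0)]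
      linear_combination -h12
    have hφb : m / (γ * m - 1) = m := by
      rw [hm]; field_simp; norm_num
    rw [hφa, hφb] at hsub
    have hI2 : (∫ s in m..t₂, Real.exp (-s ^ 2))
        = ∫ s in t₁..m, ((γ * s - 1) ^ 2)⁻¹ * Real.exp (-(s / (γ * s - 1)) ^ 2) := by
      have h1 : (∫ s in t₁..m, (-(((γ * s - 1) ^ 2)⁻¹)) •
          ((fun v : ℝ => Real.exp (-v ^ 2)) ∘ (fun s => s / (γ * s - 1))) s)
          = ∫ s in t₁..m, -(((γ * s - 1) ^ 2)⁻¹ * Real.exp (-(s / (γ * s - 1)) ^ 2)) := by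
        apply intervalIntegral.integral_congr
        intro s _
        simp only [Function.comp_apply, smul_eq_mul]
        ring
      rw [h1, intervalIntegral.integral_neg] at hsub
      have hsymm : (∫ s in t₂..m, Real.exp (-s ^ 2))
          = -∫ s in m..t₂, Real.exp (-s ^ 2) := intervalIntegral.integral_symm m t₂
      rw [hsymm] at hsub
      linarith
    rw [hI2]
    apply intervalIntegral.integral_lt_integral_of_continuousOn_of_le_of_exists_lt hlt1
    · fun_prop
    · apply ContinuousOn.mul
      · apply ContinuousOn.inv₀
        · fun_prop
        · intro s hs
          have hst : 0 < γ * s - 1 := by have := hs.1; nlinarith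
          positivity
      · apply ContinuousOn.comp hgc.continuousOn _ (Set.mapsTo_univ _ _)
        apply ContinuousOn.div
        · fun_prop
        · fun_prop
        · intro s hs
          have hst : 0 < γ * s - 1 := by have := hs.1; nlinarith
          exact hst.ne'
    · intro s hs
      rcases eq_or_lt_of_le hs.2 with heq | hlt
      · -- s = m : equality
        rw [heq]
        have h1' : γ * m - 1 = 1 := by rw [hm]; field_simp; norm_num
        rw [h1', div_one]
        norm_num
      · exact (key_pointwise γ t₁ t₂ hγ h1 h2 heq1 heq2 hlt1 hlt2 hs.1 hlt).le
    · refine ⟨(t₁ + m) / 2, ⟨by linarith, by linarith⟩, ?_⟩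
      exact key_pointwise γ t₁ t₂ hγ h1 h2 heq1 heq2 hlt1 hlt2 (by linarith) (by linarith)
  linarith
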